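/- arXiv:1202.6413 — 3 statements merged into one kernel-verified Lean document; each statement's English description precedes it below -/
import Mathlib

section
/- Let $(C,D)$ be an inclusion such that the relative commutant $D^c := \{x \in C : xd = dx \text{ for all } d \in D\}$ is a commutative subalgebra of $C$. Then $(C, D^c)$ is a MASA inclusion (i.e., $D^c$ equals its own relative commutant in $C$), and every normalizer of $D$ is a normalizer of $D^c$: $N(C,D) \subseteq N(C,D^c)$. In particular the identity map is a regular $*$-homomorphism from $(C,D)$ to $(C,D^c)$. -/
/-- `v` is a normalizer of the subset `S`:  `v* S v ⊆ S` and `v S v* ⊆ S`. -/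
def IsNormalizer {C : Type*} [Mul C] [Star C] (S : Set C) (v : C) : Prop :=
  ∀ d ∈ S, star v * d * v ∈ S ∧ v * d * star v ∈ S

/-! For a normalizer `w` of `D`, both `w w*` and `w* w` lie in `D`. If `x` commutes with `D`,
put `z = [w* x w, d]` for `d ∈ D`. Moving `x` past `w e w*` and `w e d w*` (both in `D`) and then
commuting `w* w` with `d` shows `w e z = 0` for every `e ∈ D`; taking `e = 1` and `e = d*` gives
`z* z = 0`, so `z = 0` by the C*-identity. Applying this to `w` and `w*` shows that normalizers of
`D` normalize `Dᶜ`. Maximality of `Dᶜ` is only the antitonicity of centralizers, since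
`D ⊆ Dᶜ`. -/

theorem isNormalizer_star {C : Type*} [Mul C] [InvolutiveStar C] {S : Set C} {v : C} :
    IsNormalizer S (star v) ↔ IsNormalizer S v :=
  forall₂_congr fun _ _ => by rw [star_star, and_comm]

theorem IsNormalizer.star_mul_self_mem {C : Type*} [MulOneClass C] [Star C] {S : Set C} {v : C}
    (hv : IsNormalizer S v) (h1 : (1 : C) ∈ S) : star v * v ∈ S := by
  simpa only [mul_one] using (hv 1 h1).1

theorem setOf_forall_mul_comm_eq_centralizer {M : Type*} [Mul M] (S : Set M) :
    {x : M | ∀ d ∈ S, x * d = d * x} = Set.centralizer S := by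
  ext x
  exact forall₂_congr fun _ _ => eq_comm

theorem mul_mul_commutator_star_mul_mul_eq_zero {C : Type*} [Ring C] [Star C] {x w e d : C}
    (he : Commute x (w * e * star w)) (hed : Commute x (w * (e * d) * star w))
    (hd : Commute (star w * w) d) :
    w * e * (star w * x * w * d - d * (star w * x * w)) = 0 :=
  calc w * e * (star w * x * w * d - d * (star w * x * w))
      = w * e * star w * x * (w * d) - w * (e * d) * star w * x * w := by noncomm_ring
    _ = x * (w * e * star w) * (w * d) - x * (w * (e * d) * star w) * w := by
        rw [← he.eq, ← hed.eq]
    _ = x * w * e * (star w * w * d) - x * w * e * (d * (star w * w)) := by noncomm_ring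
    _ = 0 := by rw [hd.eq, sub_self]

theorem commute_star_mul_mul_of_mul_commutator_eq_zero {C : Type*} [NormedRing C] [StarRing C]
    [CStarRing C] {x w d : C}
    (h₁ : w * (star w * x * w * d - d * (star w * x * w)) = 0)
    (h₂ : w * star d * (star w * x * w * d - d * (star w * x * w)) = 0) :
    Commute (star w * x * w) d := by
  set z := star w * x * w * d - d * (star w * x * w)
  have hz : star z * z = 0 :=
    calc star z * z = star d * star w * star x * (w * z) - star w * star x * (w * star d * z) := by
          simp only [z, star_sub, star_mul, star_star]; noncomm_ring
      _ = 0 := by rw [h₁, h₂, mul_zero, mul_zero, sub_zero]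
  exact sub_eq_zero.mp (CStarRing.star_mul_self_eq_zero_iff z |>.mp hz)

section StarSubalgebra

variable {R C : Type*} [CommSemiring R] [StarRing R] [NormedRing C] [StarRing C] [CStarRing C]
  [Algebra R C] [StarModule R C] {D : StarSubalgebra R C}

theorem IsNormalizer.star_mul_mul_mem_centralizer (hD : ∀ a ∈ D, ∀ b ∈ D, a * b = b * a)
    {w x : C} (hw : IsNormalizer (D : Set C) w) (hx : x ∈ Set.centralizer (D : Set C)) :
    star w * x * w ∈ Set.centralizer (D : Set C) := by
  intro d hd
  have hxD : ∀ e ∈ D, Commute x (w * e * star w) := fun e he => (hx _ (hw e he).2).symm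
  have hww : Commute (star w * w) d := hD _ (hw.star_mul_self_mem (one_mem D)) d hd
  refine (commute_star_mul_mul_of_mul_commutator_eq_zero ?_ ?_).symm.eq
  · simpa only [mul_one, one_mul] using
      mul_mul_commutator_star_mul_mul_eq_zero (hxD 1 (one_mem D))
        (hxD _ (mul_mem (one_mem D) hd)) hww
  · exact mul_mul_commutator_star_mul_mul_eq_zero (hxD _ (star_mem hd))
      (hxD _ (mul_mem (star_mem hd) hd)) hww

theorem IsNormalizer.centralizer (hD : ∀ a ∈ D, ∀ b ∈ D, a * b = b * a) {w : C}
    (hw : IsNormalizer (D : Set C) w) : IsNormalizer (Set.centralizer (D : Set C)) w :=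
  fun _ hx => ⟨hw.star_mul_mul_mem_centralizer hD hx, by
    simpa only [star_star] using (isNormalizer_star.mpr hw).star_mul_mul_mem_centralizer hD hx⟩

end StarSubalgebra

theorem relativeCommutant_masa_and_normalizers_general
    {C : Type*} [NormedRing C] [StarRing C] [CStarRing C] [NormedAlgebra ℂ C]
    [StarModule ℂ C]
    (D : StarSubalgebra ℂ C)
    (hDcomm : ∀ a ∈ D, ∀ b ∈ D, a * b = b * a) :
    -- `Dᶜ` is a MASA: every element commuting with all of `Dᶜ` lies in `Dᶜ`
    (∀ x : C, (∀ y ∈ {x : C | ∀ d ∈ D, x * d = d * x}, x * y = y * x) →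
      x ∈ {x : C | ∀ d ∈ D, x * d = d * x}) ∧
    -- every normalizer of `D` is a normalizer of `Dᶜ`
    (∀ v : C, IsNormalizer (D : Set C) v →
      IsNormalizer {x : C | ∀ d ∈ D, x * d = d * x} v) := by
  have hDc : {x : C | ∀ d ∈ D, x * d = d * x} = Set.centralizer D :=
    setOf_forall_mul_comm_eq_centralizer _
  rw [hDc]
  have hD : (D : Set C) ⊆ Set.centralizer D := fun a ha b hb => hDcomm b hb a ha
  exact ⟨fun x hx => Set.centralizer_subset hD fun y hy => (hx y hy).symm,
    fun v hv => hv.centralizer hDcomm⟩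

/-- Let `(C,D)` be an inclusion whose relative commutant `Dᶜ = {x : xd = dx ∀ d ∈ D}` is
commutative.  Then `(C, Dᶜ)` is a MASA inclusion and `N(C,D) ⊆ N(C,Dᶜ)`; in particular the
identity map is a regular `*`-homomorphism from `(C,D)` to `(C,Dᶜ)`. -/
theorem relativeCommutant_masa_and_normalizers
    {C : Type*} [NormedRing C] [StarRing C] [CStarRing C] [NormedAlgebra ℂ C]
    [CompleteSpace C] [StarModule ℂ C]
    (D : StarSubalgebra ℂ C) (hDclosed : IsClosed (D : Set C))
    (hDcomm : ∀ a ∈ D, ∀ b ∈ D, a * b = b * a)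
    -- the relative commutant of `D` in `C` is commutative
    (hcomm : ∀ a ∈ {x : C | ∀ d ∈ D, x * d = d * x},
      ∀ b ∈ {x : C | ∀ d ∈ D, x * d = d * x}, a * b = b * a) :
    -- `Dᶜ` is a MASA: every element commuting with all of `Dᶜ` lies in `Dᶜ`
    (∀ x : C, (∀ y ∈ {x : C | ∀ d ∈ D, x * d = d * x}, x * y = y * x) →
      x ∈ {x : C | ∀ d ∈ D, x * d = d * x}) ∧
    -- every normalizer of `D` is a normalizer of `Dᶜ`
    (∀ v : C, IsNormalizer (D : Set C) v →
      IsNormalizer {x : C | ∀ d ∈ D, x * d = d * x} v) :=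
  relativeCommutant_masa_and_normalizers_general D hDcomm
end

section
/- Let $(C,D)$ be a regular MASA inclusion and suppose $N \subseteq N(C,D)$ is a countable set such that the norm-closed $D$-bimodule generated by $N$ is $C$, i.e., the closed linear span of $\{d v e : v \in N,\ d,e \in D\}$ equals $C$. Then the set $\{\sigma \in \hat{D} : \sigma \text{ has a unique extension to a state on } C\}$ is dense in the character space $\hat{D}$ (with the weak-* topology). -/
/-!
A character `σ` of `D` always extends to a state (Hahn–Banach, since a unital functional of norm
one is positive), and every state extension `ρ` of `σ` has `D` in its multiplicative domain:
`ρ (d * x * e) = σ d * ρ x * σ e`. Hence `ρ` is determined by its values on `N`, and it suffices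
that `σ` forces the value `ρ v` for each `v ∈ N`.

For a normalizer `v` let `F_v` be the closed set of characters `τ` with
`τ (v⋆ d v) = τ (v v⋆) τ d` for all `d ∈ D`. If `σ ∉ F_v`, comparing `ρ (v · v⋆ d v)` with
`ρ (v v⋆ d · v)` forces `ρ v = 0`. If `σ` is in the interior of `F_v`, pick `h ∈ D` with
`σ h = 1` vanishing off `F_v`; then `(v h d - d v h)⋆ (v h d - d v h) ∈ D` vanishes at every
character, so `v h` commutes with `D`, hence `v h ∈ D` by maximality and
`ρ v = ρ (v h) = σ (v h)`. Since `N` is countable, the characters lying on no boundary `∂F_v`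
form a dense set by Baire's theorem.
-/

open scoped ComplexOrder

open WeakDual

namespace PositiveLinearMap

variable {A : Type*} [NonUnitalCStarAlgebra A] [PartialOrder A] [StarOrderedRing A]

noncomputable def ofStarMulSelfNonneg (ρ : A →ₗ[ℂ] ℂ) (hρ : ∀ x, 0 ≤ ρ (star x * x)) :
    A →ₚ[ℂ] ℂ :=
  .mk₀ ρ fun a ha => by
    rw [StarOrderedRing.nonneg_iff] at ha
    induction ha using AddSubmonoid.closure_induction with
    | mem _ hx => obtain ⟨x, rfl⟩ := hx; exact hρ x
    | zero => simp
    | add _ _ _ _ hx hy => rw [map_add]; exact add_nonneg hx hy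

@[simp]
lemma ofStarMulSelfNonneg_apply (ρ : A →ₗ[ℂ] ℂ) (hρ : ∀ x, 0 ≤ ρ (star x * x)) (x : A) :
    ofStarMulSelfNonneg ρ hρ x = ρ x := rfl

variable (f : A →ₚ[ℂ] ℂ) {c : A}

lemma norm_toPreGNS_eq_zero (hc : f (star c * c) = 0) : ‖f.toPreGNS c‖ = 0 := by
  have := f.preGNS_norm_sq (f.toPreGNS c)
  rw [ofPreGNS_toPreGNS, hc] at this
  exact_mod_cast pow_eq_zero_iff two_ne_zero |>.mp this

lemma apply_star_mul_eq_zero (hc : f (star c * c) = 0) (x : A) : f (star c * x) = 0 := by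
  simpa [f.norm_toPreGNS_eq_zero hc, preGNS_inner_def] using
    norm_inner_le_norm (𝕜 := ℂ) (f.toPreGNS c) (f.toPreGNS x)

lemma apply_mul_eq_zero (hc : f (star c * c) = 0) (x : A) : f (x * c) = 0 := by
  simpa [f.norm_toPreGNS_eq_zero hc, preGNS_inner_def] using
    norm_inner_le_norm (𝕜 := ℂ) (f.toPreGNS (star x)) (f.toPreGNS c)

end PositiveLinearMap

def IsStateExtension {A : Type*} [NormedRing A] [StarRing A] [NormedAlgebra ℂ A] [StarModule ℂ A]
    (D : StarSubalgebra ℂ A) (σ : characterSpace ℂ D) (ρ : A →ₗ[ℂ] ℂ) : Prop :=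
  ρ 1 = 1 ∧ (∀ x : A, 0 ≤ ρ (star x * x)) ∧ ∀ d : D, ρ d = σ d

lemma dense_iInter_compl_frontier {X ι : Type*} [TopologicalSpace X] [BaireSpace X]
    [Countable ι] {s : ι → Set X} (hs : ∀ i, IsClosed (s i)) :
    Dense (⋂ i, (frontier (s i))ᶜ) :=
  dense_iInter_of_isOpen (fun _ => isClosed_frontier.isOpen_compl) fun i =>
    interior_eq_empty_iff_dense_compl.mp (interior_frontier (hs i))

section Gelfand

variable {B : Type*} [CommCStarAlgebra B]

lemma CommCStarAlgebra.eq_zero_of_forall_apply_eq_zero {b : B}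
    (h : ∀ τ : characterSpace ℂ B, τ b = 0) : b = 0 :=
  (gelfandStarTransform B).injective (by rw [map_zero]; ext τ; exact h τ)

lemma CommCStarAlgebra.apply_gelfandStarTransform_symm (g : C(characterSpace ℂ B, ℂ))
    (τ : characterSpace ℂ B) : τ ((gelfandStarTransform B).symm g) = g τ :=
  congr($((gelfandStarTransform B).apply_symm_apply g) τ)

lemma CommCStarAlgebra.exists_isSelfAdjoint_bump {U : Set (characterSpace ℂ B)}
    {σ : characterSpace ℂ B} (hσ : σ ∈ interior U) :
    ∃ h : B, IsSelfAdjoint h ∧ σ h = 1 ∧ ∀ τ ∉ U, τ h = 0 := by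
  obtain ⟨f, hf₀, hf₁, -⟩ := exists_continuous_zero_one_of_isClosed isClosed_singleton
    isOpen_interior.isClosed_compl (Set.disjoint_singleton_left.mpr (not_not_intro hσ))
  let g : C(characterSpace ℂ B, ℂ) := ⟨fun τ => ((1 - f τ : ℝ) : ℂ), by fun_prop⟩
  refine ⟨(gelfandStarTransform B).symm g, ?_, ?_, fun τ hτ => ?_⟩
  · refine IsSelfAdjoint.map ?_ _
    ext τ
    simp [g, Complex.conj_ofReal]
  · rw [apply_gelfandStarTransform_symm]
    simp [g, hf₀ rfl]
  · rw [apply_gelfandStarTransform_symm]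
    simp [g, hf₁ fun h => hτ (interior_subset h)]

end Gelfand

section CStarAlgebra

variable {A : Type*} [CStarAlgebra A]

lemma IsSelfAdjoint.norm_add_algebraMap_mul_I_sq_le {a : A} (ha : IsSelfAdjoint a) (t : ℝ) :
    ‖a + algebraMap ℂ A (t * Complex.I)‖ ^ 2 ≤ ‖a‖ ^ 2 + t ^ 2 := by
  rcases subsingleton_or_nontrivial A with _ | _
  · simp only [Subsingleton.elim _ (0 : A), norm_zero]
    nlinarith [sq_nonneg t]
  set z : ℂ := t * Complex.I
  have hz : star z = -z := by simp [z, Complex.conj_ofReal]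
  have hsq : star (a + algebraMap ℂ A z) * (a + algebraMap ℂ A z)
      = a * a + algebraMap ℂ A (-z * z) := by
    simp only [star_add, ha.star_eq, ← algebraMap_star_comm, hz, add_mul, mul_add, map_neg,
      map_mul]
    rw [neg_mul, Algebra.commutes z a]
    noncomm_ring
  rw [sq, ← CStarRing.norm_star_mul_self, hsq]
  have hzz : ‖-z * z‖ = t ^ 2 := by simp [z, sq]
  calc ‖a * a + algebraMap ℂ A (-z * z)‖ ≤ ‖a‖ * ‖a‖ + t ^ 2 := by
        refine (norm_add_le _ _).trans (add_le_add (norm_mul_le a a) ?_)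
        rw [norm_algebraMap', hzz]
    _ = ‖a‖ ^ 2 + t ^ 2 := by ring

namespace ContinuousLinearMap

variable {g : StrongDual ℂ A} (hg : ‖g‖ ≤ 1) (hg1 : g 1 = 1)
include hg hg1

lemma im_apply_eq_zero_of_isSelfAdjoint {a : A} (ha : IsSelfAdjoint a) : (g a).im = 0 := by
  have key (t : ℝ) : (g a).re ^ 2 + ((g a).im + t) ^ 2 ≤ ‖a‖ ^ 2 + t ^ 2 := by
    have hgu : g (a + algebraMap ℂ A (t * Complex.I)) = g a + t * Complex.I := by
      rw [map_add, Algebra.algebraMap_eq_smul_one, map_smul, hg1, smul_eq_mul, mul_one]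
    have hle := (g.le_of_opNorm_le hg (a + algebraMap ℂ A (t * Complex.I)))
    rw [hgu, one_mul] at hle
    have hre_im : g a + t * Complex.I = (g a).re + ((g a).im + t : ℝ) * Complex.I := by
      apply Complex.ext <;> simp
    calc (g a).re ^ 2 + ((g a).im + t) ^ 2 = ‖g a + t * Complex.I‖ ^ 2 := by
          rw [hre_im, Complex.sq_norm, Complex.normSq_add_mul_I]
      _ ≤ ‖a + algebraMap ℂ A (t * Complex.I)‖ ^ 2 := by gcongr
      _ ≤ ‖a‖ ^ 2 + t ^ 2 := ha.norm_add_algebraMap_mul_I_sq_le t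
  -- `key t` reads `re² + im² + 2 im t ≤ ‖a‖²`, which fails for large `t` of the sign of `im`.
  by_contra h
  have hkey := key ((‖a‖ ^ 2 + 1) / (g a).im)
  have ht : (g a).im * ((‖a‖ ^ 2 + 1) / (g a).im) = ‖a‖ ^ 2 + 1 := mul_div_cancel₀ _ h
  nlinarith [sq_nonneg (g a).re, sq_nonneg (g a).im]

lemma apply_nonneg [PartialOrder A] [StarOrderedRing A] {a : A} (ha : 0 ≤ a) : 0 ≤ g a := by
  have hmem : algebraMap ℝ A ‖a‖ - a ∈ Set.Icc 0 (algebraMap ℝ A ‖a‖) :=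
    ⟨sub_nonneg.mpr (IsSelfAdjoint.of_nonneg ha).le_algebraMap_norm_self, sub_le_self _ ha⟩
  have hle := (CStarAlgebra.mem_Icc_algebraMap_iff_norm_le (norm_nonneg a)).mp hmem |>.2
  have hga : g (algebraMap ℝ A ‖a‖ - a) = ‖a‖ - g a := by
    rw [map_sub, IsScalarTower.algebraMap_apply ℝ ℂ A, Algebra.algebraMap_eq_smul_one, map_smul,
      hg1, smul_eq_mul, mul_one]
    rfl
  have him := im_apply_eq_zero_of_isSelfAdjoint hg hg1 (IsSelfAdjoint.of_nonneg ha)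
  have hre : ‖(‖a‖ : ℂ) - g a‖ ≤ ‖a‖ := by
    rw [← hga]
    exact (g.le_of_opNorm_le hg _).trans (by rwa [one_mul])
  have hre' := (Complex.abs_re_le_norm _).trans hre
  rw [Complex.sub_re, Complex.ofReal_re, abs_le] at hre'
  exact Complex.le_def.mpr ⟨sub_le_self_iff _ |>.mp hre'.2, by simp [him]⟩

end ContinuousLinearMap

lemma exists_isStateExtension (D : StarSubalgebra ℂ A) [CompleteSpace D]
    (σ : characterSpace ℂ D) : ∃ ρ, IsStateExtension D σ ρ := by
  have : Nontrivial A := by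
    by_contra h
    rw [not_nontrivial_iff_subsingleton] at h
    simpa [Subsingleton.elim (1 : D) 0] using map_one σ
  obtain ⟨g, hgD, hg⟩ := exists_extension_norm_eq (Subalgebra.toSubmodule D.toSubalgebra)
    (toStrongDual (σ : WeakDual ℂ D))
  have hg_le : ‖g‖ ≤ 1 := hg ▸ (CharacterSpace.norm_le_norm_one σ).trans_eq norm_one
  have hg1 : g 1 = 1 := (hgD ⟨1, one_mem D⟩).trans (map_one σ)
  let _ := CStarAlgebra.spectralOrder A
  have := CStarAlgebra.spectralOrderedRing A
  exact ⟨g, hg1, fun x => g.apply_nonneg hg_le hg1 (star_mul_self_nonneg x), fun d => hgD d⟩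

variable {D : StarSubalgebra ℂ A} {σ : characterSpace ℂ D} {ρ : A →ₗ[ℂ] ℂ}

namespace IsStateExtension

lemma continuous (hρ : IsStateExtension D σ ρ) : Continuous ρ := by
  let _ := CStarAlgebra.spectralOrder A
  have := CStarAlgebra.spectralOrderedRing A
  exact map_continuous (PositiveLinearMap.ofStarMulSelfNonneg ρ hρ.2.1)

lemma apply_mul_eq_zero (hρ : IsStateExtension D σ ρ) {c : D} (hc : σ c = 0) (x : A) :
    ρ (x * c) = 0 ∧ ρ (c * x) = 0 := by
  let _ := CStarAlgebra.spectralOrder A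
  have := CStarAlgebra.spectralOrderedRing A
  let f := PositiveLinearMap.ofStarMulSelfNonneg ρ hρ.2.1
  have h₁ : f (star (c : A) * c) = 0 := by simpa [f, hc] using hρ.2.2 (star c * c)
  have h₂ : f (star (star (c : A)) * star c) = 0 := by simpa [f, hc] using hρ.2.2 (c * star c)
  exact ⟨f.apply_mul_eq_zero h₁ x, by simpa [f] using f.apply_star_mul_eq_zero h₂ x⟩

lemma apply_mul_coe (hρ : IsStateExtension D σ ρ) (x : A) (d : D) :
    ρ (x * d) = ρ x * σ d := by
  have := (hρ.apply_mul_eq_zero (c := d - algebraMap ℂ D (σ d))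
    (by simp [Algebra.algebraMap_eq_smul_one]) x).1
  simpa [mul_sub, Algebra.algebraMap_eq_smul_one, sub_eq_zero, mul_comm] using this

lemma apply_coe_mul (hρ : IsStateExtension D σ ρ) (d : D) (x : A) :
    ρ (d * x) = σ d * ρ x := by
  have := (hρ.apply_mul_eq_zero (c := d - algebraMap ℂ D (σ d))
    (by simp [Algebra.algebraMap_eq_smul_one]) x).2
  simpa [sub_mul, Algebra.algebraMap_eq_smul_one, sub_eq_zero] using this

lemma apply_coe_mul_mul_coe (hρ : IsStateExtension D σ ρ) (d : D) (x : A) (e : D) :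
    ρ (d * x * e) = σ d * ρ x * σ e := by
  rw [hρ.apply_mul_coe, hρ.apply_coe_mul]

lemma eq_of_dense_span {N : Set A}
    (hN : Dense ((Submodule.span ℂ {x : A | ∃ v ∈ N, ∃ d ∈ D, ∃ e ∈ D, x = d * v * e} :
      Submodule ℂ A) : Set A))
    {ρ' : A →ₗ[ℂ] ℂ} (hρ : IsStateExtension D σ ρ) (hρ' : IsStateExtension D σ ρ')
    (h : ∀ v ∈ N, ρ v = ρ' v) : ρ = ρ' := by
  refine LinearMap.coe_injective (hρ.continuous.ext_on hN hρ'.continuous fun x hx => ?_)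
  induction hx using Submodule.span_induction with
  | mem _ hx =>
    obtain ⟨v, hv, d, hd, e, he, rfl⟩ := hx
    lift d to D using hd
    lift e to D using he
    rw [hρ.apply_coe_mul_mul_coe, hρ'.apply_coe_mul_mul_coe, h v hv]
  | zero => simp
  | add _ _ _ _ hx hy => simp [hx, hy]
  | smul _ _ _ hx => simp [hx]

end IsStateExtension

namespace IsNormalizer

variable {v : A} (hv : IsNormalizer (D : Set A) v)

def conj (d : D) : D := ⟨star v * d * v, (hv d d.2).1⟩

def mulStar : D := ⟨v * star v, by simpa using (hv 1 (one_mem D)).2⟩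

@[simp]
lemma coe_conj (d : D) : (hv.conj d : A) = star v * d * v := rfl

@[simp]
lemma coe_mulStar : (hv.mulStar : A) = v * star v := rfl

/-- Off the characters vanishing on `v v⋆`, this is the fixed-point set of the partial
homeomorphism `τ ↦ τ (v⋆ · v) / τ (v⋆ v)` of the character space. -/
def fixedSet : Set (characterSpace ℂ D) := {τ | ∀ d, τ (hv.conj d) = τ hv.mulStar * τ d}

lemma isClosed_fixedSet : IsClosed hv.fixedSet := by
  simp only [fixedSet, Set.ofPred_forall]
  have (d : D) : Continuous fun τ : characterSpace ℂ D => τ d :=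
    (eval_continuous d).comp continuous_subtype_val
  exact isClosed_iInter fun d => isClosed_eq (this _) ((this _).mul (this _))

lemma mul_mem_of_apply_eq_zero_off_fixedSet (hmasa : ∀ x : A, (∀ d ∈ D, x * d = d * x) → x ∈ D)
    (hsep : ∀ z : D, (∀ τ : characterSpace ℂ D, τ z = 0) → z = 0) {h : D} (hh : IsSelfAdjoint h)
    (hsupp : ∀ τ ∉ hv.fixedSet, τ h = 0) : v * h ∈ D := by
  refine hmasa _ fun d hd => ?_
  lift d to D using hd
  let z : D := star d * h * hv.conj 1 * h * d - star d * h * hv.conj d * h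
    - h * hv.conj (star d) * h * d + h * hv.conj (star d * d) * h
  have hz : (z : A) = star (v * h * d - d * (v * h)) * (v * h * d - d * (v * h)) := by
    have hh' : star (h : A) = h := by simpa using congr_arg Subtype.val hh.star_eq
    simp only [z, AddMemClass.coe_add, AddSubgroupClass.coe_sub, MulMemClass.coe_mul,
      StarMemClass.coe_star, coe_conj, OneMemClass.coe_one, mul_one, star_sub, star_mul, hh']
    noncomm_ring
  have hz0 : z = 0 := hsep z fun τ => by
    by_cases hτ : τ ∈ hv.fixedSet
    · simp only [z, map_sub, map_add, map_mul, hτ d, hτ 1, hτ (star d), hτ (star d * d), map_one]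
      ring
    · simp [z, hsupp τ hτ]
  rwa [hz0, ZeroMemClass.coe_zero, eq_comm, CStarRing.star_mul_self_eq_zero_iff, sub_eq_zero] at hz

end IsNormalizer

namespace IsStateExtension

lemma apply_eq_zero_of_notMem_fixedSet (hρ : IsStateExtension D σ ρ) {v : A}
    (hv : IsNormalizer (D : Set A) v) (hσ : σ ∉ hv.fixedSet) : ρ v = 0 := by
  obtain ⟨d, hd⟩ := not_forall.mp hσ
  have key : ρ v * σ (hv.conj d) = ρ v * (σ hv.mulStar * σ d) :=
    calc ρ v * σ (hv.conj d) = ρ (v * hv.conj d) := (hρ.apply_mul_coe v _).symm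
      _ = ρ ((hv.mulStar * d : D) * v) := by simp [mul_assoc]
      _ = ρ v * (σ hv.mulStar * σ d) := by rw [hρ.apply_coe_mul, map_mul, mul_comm]
  have : ρ v * (σ (hv.conj d) - σ hv.mulStar * σ d) = 0 := by rw [mul_sub, key, sub_self]
  exact (mul_eq_zero.mp this).resolve_right (sub_ne_zero.mpr hd)

lemma apply_eq_of_mul_mem (hρ : IsStateExtension D σ ρ) {v : A} {h : D} (hσh : σ h = 1)
    (hvh : v * h ∈ D) : ρ v = σ ⟨v * h, hvh⟩ := by
  rw [← hρ.2.2 ⟨v * h, hvh⟩, hρ.apply_mul_coe, hσh, mul_one]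

end IsStateExtension

lemma IsNormalizer.exists_forall_isStateExtension_apply_eq {v : A}
    (hv : IsNormalizer (D : Set A) v) [CompleteSpace D] (hDcomm : ∀ a ∈ D, ∀ b ∈ D, a * b = b * a)
    (hmasa : ∀ x : A, (∀ d ∈ D, x * d = d * x) → x ∈ D) (hσ : σ ∉ frontier hv.fixedSet) :
    ∃ w, ∀ ρ, IsStateExtension D σ ρ → ρ v = w := by
  by_cases hσS : σ ∈ hv.fixedSet
  · have hσint : σ ∈ interior hv.fixedSet := (mem_interior_iff_notMem_frontier hσS).mpr hσ
    let _ : CommCStarAlgebra D :=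
      { mul_comm a b := Subtype.ext (hDcomm a a.2 b b.2)
        norm_mul_self_le x := CStarRing.norm_star_mul_self (x := (x : A)) |>.symm.le }
    obtain ⟨h, hh, hσh, hsupp⟩ := CommCStarAlgebra.exists_isSelfAdjoint_bump hσint
    have hvh := hv.mul_mem_of_apply_eq_zero_off_fixedSet hmasa
      (fun _ => CommCStarAlgebra.eq_zero_of_forall_apply_eq_zero) hh hsupp
    exact ⟨_, fun ρ hρ => hρ.apply_eq_of_mul_mem hσh hvh⟩
  · exact ⟨0, fun ρ hρ => hρ.apply_eq_zero_of_notMem_fixedSet hv hσS⟩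

end CStarAlgebra

theorem dense_unique_extension_general
    {C : Type*} [NormedRing C] [StarRing C] [CStarRing C] [NormedAlgebra ℂ C]
    [CompleteSpace C] [StarModule ℂ C]
    (D : StarSubalgebra ℂ C) (hDclosed : IsClosed (D : Set C))
    (hDcomm : ∀ a ∈ D, ∀ b ∈ D, a * b = b * a)
    -- `D` is a MASA in `C`
    (hmasa : ∀ x : C, (∀ d ∈ D, x * d = d * x) → x ∈ D)
    (N : Set C) (hNcount : N.Countable) (hNnorm : ∀ v ∈ N, IsNormalizer (D : Set C) v)
    -- the norm-closed `D`-bimodule generated by `N` is all of `C`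
    (hNgen : Dense
      ((Submodule.span ℂ {x : C | ∃ v ∈ N, ∃ d ∈ D, ∃ e ∈ D, x = d * v * e} :
        Submodule ℂ C) : Set C)) :
    Dense {σ : WeakDual.characterSpace ℂ D | ∃! ρ : C →ₗ[ℂ] ℂ,
      ρ 1 = 1 ∧ (∀ x : C, 0 ≤ ρ (star x * x)) ∧
      ∀ d : D, ρ (d : C) = (σ : WeakDual ℂ D) d} := by
  let _ : CStarAlgebra C := { norm_mul_self_le x := CStarRing.norm_star_mul_self.symm.le }
  have _ : CompleteSpace D := hDclosed.completeSpace_coe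
  have _ : Countable N := hNcount.to_subtype
  have hN (v : N) : IsNormalizer (D : Set C) v := hNnorm v v.2
  refine (dense_iInter_compl_frontier fun v : N => (hN v).isClosed_fixedSet).mono fun σ hσ => ?_
  obtain ⟨ρ₀, hρ₀⟩ := exists_isStateExtension D σ
  refine ⟨ρ₀, hρ₀, fun ρ hρ => IsStateExtension.eq_of_dense_span hNgen hρ hρ₀ fun v hv => ?_⟩
  obtain ⟨w, hw⟩ := (hN ⟨v, hv⟩).exists_forall_isStateExtension_apply_eq hDcomm hmasa
    (Set.mem_iInter.mp hσ ⟨v, hv⟩)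
  rw [hw ρ hρ, hw ρ₀ hρ₀]

/-- Let `(C,D)` be a regular MASA inclusion and `N ⊆ N(C,D)` a countable set such that the
norm-closed `D`-bimodule generated by `N` is `C`.  Then the set of characters of `D` having a
unique state extension to `C` is weak-* dense in the character space of `D`. -/
theorem dense_unique_extension
    {C : Type*} [NormedRing C] [StarRing C] [CStarRing C] [NormedAlgebra ℂ C]
    [CompleteSpace C] [StarModule ℂ C]
    (D : StarSubalgebra ℂ C) (hDclosed : IsClosed (D : Set C))
    (hDcomm : ∀ a ∈ D, ∀ b ∈ D, a * b = b * a)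
    -- `D` is a MASA in `C`
    (hmasa : ∀ x : C, (∀ d ∈ D, x * d = d * x) → x ∈ D)
    -- regularity: the span of the normalizers is dense in `C`
    (hreg : Dense
      ((Submodule.span ℂ {v : C | IsNormalizer (D : Set C) v} : Submodule ℂ C) : Set C))
    (N : Set C) (hNcount : N.Countable) (hNnorm : ∀ v ∈ N, IsNormalizer (D : Set C) v)
    -- the norm-closed `D`-bimodule generated by `N` is all of `C`
    (hNgen : Dense
      ((Submodule.span ℂ {x : C | ∃ v ∈ N, ∃ d ∈ D, ∃ e ∈ D, x = d * v * e} :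
        Submodule ℂ C) : Set C)) :
    Dense {σ : WeakDual.characterSpace ℂ D | ∃! ρ : C →ₗ[ℂ] ℂ,
      ρ 1 = 1 ∧ (∀ x : C, 0 ≤ ρ (star x * x)) ∧
      ∀ d : D, ρ (d : C) = (σ : WeakDual ℂ D) d} :=
  dense_unique_extension_general D hDclosed hDcomm hmasa N hNcount hNnorm hNgen
end

section
/- Let $(C,D)$ be a MASA inclusion and suppose $E : C \to C$ is a conditional expectation onto $D$: a linear map with $E(x) \in D$ for all $x \in C$, $E(d) = d$ for all $d \in D$, $E$ positive (i.e., $E(x^*x) \geq 0$ for all $x$), and $E(d\,x\,e) = d\,E(x)\,e$ for all $d, e \in D$ and $x \in C$. Then for every character $\sigma$ of $D$, the functional $\rho := \sigma \circ E$ (i.e., $\rho(x) = \sigma(E(x))$) is a $D$-compatible state on $C$: $\rho$ is a state with $\rho|_D = \sigma$ and $|\rho(v)|^2 \in \{0, \rho(v^*v)\}$ for every normalizer $v \in N(C,D)$. -/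
open scoped ComplexOrder

/-!
Write `a = E v`. Applying `E` to `v (v⋆ e v) = (v v⋆ e) v` shows that `a` intertwines
`e ↦ v⋆ e v` with `e ↦ v v⋆ e` on `D`; consequently `w = v a⋆` satisfies `w⋆ e w = e w⋆ w` for
`e ∈ D`, and the C⋆-identity forces `w` to commute with `D`. By maximality `w ∈ D`, so
`w = E w = a a⋆`, whence `a (v⋆ v) a⋆ = w⋆ w = (a a⋆)²`. Applying a character `σ` of `D` gives
`|σ a|² σ(v⋆ v) = |σ a|⁴`, which is the compatibility condition. Positivity of `σ ∘ E` comes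
from spectral permanence: `σ(x) ∈ spectrum x` for `x ∈ D`.
-/

section Algebraic

variable {R C : Type*} [CommSemiring R] [StarRing R] [Ring C] [StarRing C] [Algebra R C]
  [StarModule R C] {D : StarSubalgebra R C} {v : C}

namespace IsNormalizer

lemma star_mul_self_mem_s18 (hv : IsNormalizer (D : Set C) v) : star v * v ∈ D := by
  simpa using (hv 1 (one_mem D)).1

lemma mul_star_self_mem (hv : IsNormalizer (D : Set C) v) : v * star v ∈ D := by
  simpa using (hv 1 (one_mem D)).2

lemma expectation_intertwines (E : C → C)
    (hEbimod : ∀ d ∈ D, ∀ e ∈ D, ∀ x : C, E (d * x * e) = d * E x * e)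
    (hv : IsNormalizer (D : Set C) v) {e : C} (he : e ∈ D) :
    E v * (star v * e * v) = v * star v * e * E v := by
  calc E v * (star v * e * v) = E (1 * v * (star v * e * v)) := by
        rw [hEbimod 1 (one_mem D) _ (hv e he).1, one_mul]
    _ = E (v * star v * e * v * 1) := by noncomm_ring
    _ = v * star v * e * E v := by
        rw [hEbimod _ (mul_mem hv.mul_star_self_mem he) 1 (one_mem D), mul_one]

end IsNormalizer

lemma star_mul_mul_eq_of_intertwines {a e : C}
    (htw : ∀ e' ∈ D, a * (star v * e' * v) = v * star v * e' * a) (he : e ∈ D)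
    (hc : v * star v * e = e * (v * star v)) :
    star (v * star a) * e * (v * star a) = e * (star (v * star a) * (v * star a)) := by
  have h1 := htw 1 (one_mem D)
  simp only [mul_one] at h1
  calc star (v * star a) * e * (v * star a) = a * (star v * e * v) * star a := by
        simp only [star_mul, star_star, mul_assoc]
    _ = e * (a * (star v * v) * star a) := by rw [htw e he, h1, hc]; noncomm_ring
    _ = e * (star (v * star a) * (v * star a)) := by simp only [star_mul, star_star, mul_assoc]

end Algebraic

/-- The C⋆-identity turns `‖[w, d]‖² = ‖[w, d]⋆ [w, d]‖` into a sum of four terms that cancel. -/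
lemma commute_of_forall_star_mul_mul_eq {C S : Type*} [NonUnitalNormedRing C] [StarRing C]
    [CStarRing C] [SetLike S C] [MulMemClass S C] [StarMemClass S C] {D : S} {w : C}
    (hw : ∀ e ∈ D, star w * e * w = e * (star w * w)) {d : C} (hd : d ∈ D) : Commute w d := by
  have hsd : star d ∈ D := star_mem hd
  have hzero : star (w * d - d * w) * (w * d - d * w) = 0 := by
    calc star (w * d - d * w) * (w * d - d * w)
        = star d * (star w * w) * d - star d * (star w * d * w)
          - star w * star d * w * d + star w * (star d * d) * w := by
          simp only [star_sub, star_mul]; noncomm_ring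
      _ = 0 := by
          rw [hw d hd, hw _ hsd, hw _ (mul_mem hsd hd)]; noncomm_ring
  exact sub_eq_zero.mp (CStarRing.star_mul_self_eq_zero_iff _ |>.mp hzero)

namespace IsNormalizer

variable {R C : Type*} [CommSemiring R] [StarRing R] [NormedRing C] [StarRing C] [CStarRing C]
  [Algebra R C] [StarModule R C] {D : StarSubalgebra R C} {v : C}

lemma mul_star_mem_of_intertwines (hDcomm : ∀ a ∈ D, ∀ b ∈ D, a * b = b * a)
    (hmasa : ∀ x : C, (∀ d ∈ D, x * d = d * x) → x ∈ D) (hv : IsNormalizer (D : Set C) v)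
    {a : C} (htw : ∀ e ∈ D, a * (star v * e * v) = v * star v * e * a) :
    v * star a ∈ D :=
  hmasa _ fun _ hd ↦ commute_of_forall_star_mul_mul_eq (D := D)
    (fun _ he ↦ star_mul_mul_eq_of_intertwines htw he (hDcomm _ hv.mul_star_self_mem _ he)) hd

lemma mul_star_expectation (hDcomm : ∀ a ∈ D, ∀ b ∈ D, a * b = b * a)
    (hmasa : ∀ x : C, (∀ d ∈ D, x * d = d * x) → x ∈ D) (E : C → C)
    (hErange : ∀ x : C, E x ∈ D) (hEid : ∀ d ∈ D, E d = d)
    (hEbimod : ∀ d ∈ D, ∀ e ∈ D, ∀ x : C, E (d * x * e) = d * E x * e)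
    (hv : IsNormalizer (D : Set C) v) :
    v * star (E v) = E v * star (E v) := by
  have hw := hv.mul_star_mem_of_intertwines hDcomm hmasa
    fun _ he ↦ hv.expectation_intertwines E hEbimod he
  calc v * star (E v) = E (1 * v * star (E v)) := by rw [one_mul, hEid _ hw]
    _ = E v * star (E v) := by
        rw [hEbimod 1 (one_mem D) _ (star_mem (hErange v)), one_mul]

end IsNormalizer

def AlgHom.ofFunOn {R A B S : Type*} [CommSemiring R] [Semiring A] [Semiring B] [Algebra R A]
    [Algebra R B] [SetLike S A] [SubsemiringClass S A] [SMulMemClass S R A] (s : S) (f : A → B)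
    (hadd : ∀ a ∈ s, ∀ b ∈ s, f (a + b) = f a + f b)
    (hsmul : ∀ (c : R), ∀ a ∈ s, f (c • a) = c • f a)
    (hmul : ∀ a ∈ s, ∀ b ∈ s, f (a * b) = f a * f b) (hone : f 1 = 1) : s →ₐ[R] B :=
  AlgHom.ofLinearMap
    { toFun := fun a ↦ f a
      map_add' := fun a b ↦ hadd a a.2 b b.2
      map_smul' := fun c a ↦ hsmul c a a.2 }
    hone fun a b ↦ hmul a a.2 b b.2

lemma AlgHom.apply_star_mul_self_nonneg {C : Type*} [CStarAlgebra C] {D : StarSubalgebra ℂ C}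
    [IsClosed (D : Set C)] (φ : D →ₐ[ℂ] ℂ) {y : C} (hy : star y * y ∈ D) :
    0 ≤ φ ⟨star y * y, hy⟩ := by
  have hsa : IsSelfAdjoint (star y * y) := .star_mul_self y
  have hspec : φ ⟨star y * y, hy⟩ ∈ spectrum ℂ (star y * y) := by
    simpa only [StarSubalgebra.spectrum_eq] using AlgHom.apply_mem_spectrum φ ⟨star y * y, hy⟩
  have hre := hsa.mem_spectrum_eq_re hspec
  rw [hre] at hspec ⊢
  exact_mod_cast spectrum_star_mul_self_nonneg _ (hsa.coe_mem_spectrum_complex.mp hspec)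

lemma sq_norm_apply_eq_zero_or_eq_apply {A F : Type*} [Mul A] [Star A] [FunLike F A ℂ]
    [MulHomClass F A ℂ] [StarHomClass F A ℂ] (φ : F) {a h : A}
    (H : a * h * star a = a * star a * (a * star a)) :
    ((‖φ a‖ : ℝ) : ℂ) ^ 2 = 0 ∨ ((‖φ a‖ : ℝ) : ℂ) ^ 2 = φ h := by
  have hφ : ((‖φ a‖ : ℝ) : ℂ) ^ 2 * φ h = ((‖φ a‖ : ℝ) : ℂ) ^ 2 * ((‖φ a‖ : ℝ) : ℂ) ^ 2 := by
    simpa only [map_mul, map_star, Complex.star_def, mul_right_comm _ (φ h),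
      Complex.mul_conj'] using congrArg φ H
  exact (mul_eq_mul_left_iff.mp hφ).symm.imp_right Eq.symm

/-- Let `(C,D)` be a MASA inclusion with a conditional expectation `E : C → D`.  Then for
every character `σ` of `D`, the functional `ρ = σ ∘ E` is a `D`-compatible state on `C`:
it is linear, unital, positive, restricts to `σ` on `D`, and satisfies
`|ρ(v)|² ∈ {0, ρ(v*v)}` for every normalizer `v ∈ N(C,D)`. -/
theorem expectation_gives_compatible_state
    {C : Type*} [NormedRing C] [StarRing C] [CStarRing C] [NormedAlgebra ℂ C]
    [CompleteSpace C] [StarModule ℂ C]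
    (D : StarSubalgebra ℂ C) (hDclosed : IsClosed (D : Set C))
    (hDcomm : ∀ a ∈ D, ∀ b ∈ D, a * b = b * a)
    -- `D` is a MASA in `C`
    (hmasa : ∀ x : C, (∀ d ∈ D, x * d = d * x) → x ∈ D)
    -- `E` is a conditional expectation of `C` onto `D`
    (E : C →ₗ[ℂ] C)
    (hErange : ∀ x : C, E x ∈ D)
    (hEid : ∀ d ∈ D, E d = d)
    (hEpos : ∀ x : C, ∃ y : C, E (star x * x) = star y * y)
    (hEbimod : ∀ d ∈ D, ∀ e ∈ D, ∀ x : C, E (d * x * e) = d * E x * e)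
    -- `σ` is a character of `D` (encoded as a function on `C`, constrained only on `D`)
    (σ : C → ℂ)
    (hσadd : ∀ a ∈ D, ∀ b ∈ D, σ (a + b) = σ a + σ b)
    (hσsmul : ∀ (c : ℂ), ∀ a ∈ D, σ (c • a) = c * σ a)
    (hσmul : ∀ a ∈ D, ∀ b ∈ D, σ (a * b) = σ a * σ b)
    (hσ1 : σ 1 = 1) :
    -- `ρ := σ ∘ E` is a `D`-compatible state extending `σ`
    σ (E 1) = 1 ∧
    (∀ x : C, 0 ≤ σ (E (star x * x))) ∧
    (∀ x y : C, σ (E (x + y)) = σ (E x) + σ (E y)) ∧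
    (∀ (c : ℂ) (x : C), σ (E (c • x)) = c * σ (E x)) ∧
    (∀ d ∈ D, σ (E d) = σ d) ∧
    (∀ v : C, IsNormalizer (D : Set C) v →
      (((‖σ (E v)‖ : ℝ) : ℂ) ^ 2 = 0 ∨
        ((‖σ (E v)‖ : ℝ) : ℂ) ^ 2 = σ (E (star v * v)))) := by
  let : CStarAlgebra C :=
    { ‹NormedRing C›, ‹StarRing C›, ‹CompleteSpace C›, ‹CStarRing C›, ‹NormedAlgebra ℂ C›,
      ‹StarModule ℂ C› with }
  have : IsClosed (D : Set C) := hDclosed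
  let φ : D →ₐ[ℂ] ℂ := AlgHom.ofFunOn D σ hσadd hσsmul hσmul hσ1
  refine ⟨by rw [hEid 1 (one_mem D), hσ1], fun x ↦ ?_, fun x y ↦ ?_, fun c x ↦ ?_,
    fun d hd ↦ by rw [hEid d hd], fun v hv ↦ ?_⟩
  · obtain ⟨y, hy⟩ := hEpos x
    rw [hy]
    exact φ.apply_star_mul_self_nonneg (hy ▸ hErange _)
  · rw [map_add]
    exact hσadd _ (hErange x) _ (hErange y)
  · rw [map_smul]
    exact hσsmul c _ (hErange x)
  · have hw := hv.mul_star_expectation hDcomm hmasa E hErange hEid hEbimod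
    rw [hEid _ hv.star_mul_self_mem_s18]
    let a : D := ⟨E v, hErange v⟩
    let h : D := ⟨star v * v, hv.star_mul_self_mem_s18⟩
    have H : a * h * star a = a * star a * (a * star a) := Subtype.ext <|
      calc E v * (star v * v) * star (E v) = star (v * star (E v)) * (v * star (E v)) := by
            rw [star_mul, star_star, mul_assoc, mul_assoc, mul_assoc]
        _ = E v * star (E v) * (E v * star (E v)) := by
            rw [hw, star_mul, star_star, mul_assoc]
    exact (sq_norm_apply_eq_zero_or_eq_apply φ H :)
end
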